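/- Let G be a finite group and k a field. In the commutative k-algebra k^G of k-valued functions on G with pointwise operations, let e_g denote the indicator function of g ∈ G (e_g(a) = 1 if a = g and 0 otherwise). Then the ideal of k^G generated by the elements e_{hg} − e_{gh}, for all g, h ∈ G, equals the ideal of all functions vanishing on the center Z(G) of G. (This computes the quotient Hopf algebra H^⟨1⟩ ≅ k^{Z(G)} for H = k^G, and hence the first lazy homology Hopf algebra H₁^ℓ(k^G) ≅ k^{Z(G)}.) -/

import Mathlib

/-!
Since `h * g = g⁻¹ * (g * h) * g`, the products `g * h` and `h * g` are conjugate, and a central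
element is conjugate only to itself; so `e_{hg} - e_{gh}` vanishes on the center. Conversely, if
`a` is not central, pick `g` with `g * a * g⁻¹ ≠ a`; for `h = a * g⁻¹` the generator
`e_{hg} - e_{gh} = e_a - e_{g a g⁻¹}` takes the value `1` at `a`, so `c • e_a` is a multiple of it.
Every function vanishing on the center is a sum of such `c • e_a` with `a` non-central.
-/

open Subgroup

section Group

variable {G : Type*} [Group G]

theorem isConj_mul_comm (g h : G) : IsConj (g * h) (h * g) :=
  isConj_iff.2 ⟨g⁻¹, by group⟩

theorem eq_mul_comm_iff_of_mem_center {z : G} (hz : z ∈ center G) (g h : G) :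
    z = h * g ↔ z = g * h := by
  have hz' : z ∈ Set.center G := by rwa [← coe_center]
  constructor
  · rintro rfl; exact (isConj_mul_comm g h).symm.eq_of_left_mem_center hz'
  · rintro rfl; exact (isConj_mul_comm g h).eq_of_left_mem_center hz'

theorem exists_conj_ne_of_notMem_center {a : G} (ha : a ∉ center G) :
    ∃ g : G, g * a * g⁻¹ ≠ a := by
  contrapose! ha
  exact mem_center_iff.2 fun g => by simpa [mul_inv_eq_iff_eq_mul] using ha g

end Group

section IndicatorCommutators

variable (k G : Type*) [Ring k] [Group G] [DecidableEq G]

def indicatorCommutators : Set (G → k) :=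
  {f | ∃ g h : G, f = Pi.single (h * g) 1 - Pi.single (g * h) 1}

variable {k G}

theorem indicatorCommutators_le_ker_eval {z : G} (hz : z ∈ center G) :
    Ideal.span (indicatorCommutators k G) ≤ RingHom.ker (Pi.evalRingHom (fun _ => k) z) := by
  rw [Ideal.span_le]
  rintro _ ⟨g, h, rfl⟩
  simp [Pi.single_apply, eq_mul_comm_iff_of_mem_center hz g h]

theorem single_mem_span_indicatorCommutators {a : G} (ha : a ∉ center G) (c : k) :
    Pi.single a c ∈ Ideal.span (indicatorCommutators k G) := by
  obtain ⟨g, hg⟩ := exists_conj_ne_of_notMem_center ha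
  set u : G → k := Pi.single (a * g⁻¹ * g) 1 - Pi.single (g * (a * g⁻¹)) 1
  have hu : u ∈ indicatorCommutators k G := ⟨g, a * g⁻¹, rfl⟩
  have hua : u a = 1 := by
    have : a ≠ g * (a * g⁻¹) := by rw [← mul_assoc]; exact hg.symm
    simp [u, this]
  have : Pi.single a c = Pi.single a c * u := by
    rw [← Pi.single_mul_left, hua, mul_one]
  rw [this]
  exact Ideal.mul_mem_left _ _ (Ideal.subset_span hu)

theorem span_indicatorCommutators_eq [Fintype G] :
    Ideal.span (indicatorCommutators k G) =
      ⨅ z ∈ center G, RingHom.ker (Pi.evalRingHom (fun _ => k) z) := by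
  refine le_antisymm (le_iInf₂ fun z hz => indicatorCommutators_le_ker_eval hz) fun f hf => ?_
  simp only [Ideal.mem_iInf, RingHom.mem_ker, Pi.evalRingHom_apply] at hf
  rw [← Finset.univ_sum_single f]
  refine Ideal.sum_mem _ fun a _ => ?_
  by_cases ha : a ∈ center G
  · simp [hf a ha]
  · exact single_mem_span_indicatorCommutators ha (f a)

end IndicatorCommutators

theorem ideal_span_indicator_commutators_eq_vanishing_on_center
    (k : Type*) [Field k] (G : Type*) [Group G] [Fintype G] [DecidableEq G] :
    ∀ f : G → k,
      f ∈ Ideal.span {f : G → k | ∃ g h : G,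
        f = (fun a => if a = h * g then (1 : k) else 0)
          - (fun a => if a = g * h then (1 : k) else 0)}
      ↔ ∀ z ∈ Subgroup.center G, f z = 0 := by
  intro f
  have hgen : {f : G → k | ∃ g h : G,
      f = (fun a => if a = h * g then (1 : k) else 0)
        - (fun a => if a = g * h then (1 : k) else 0)} = indicatorCommutators k G := by
    simp only [indicatorCommutators, ← Pi.single_apply]
  rw [hgen, span_indicatorCommutators_eq]
  simp [RingHom.mem_ker]
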